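/- Every k-element subset I of {0,…,n−1} can be written as a componentwise minimum I = min of the collection {I_i^l : I ≤ I_i^l} over the special subsets I_i^l. More precisely: if I = I_1 ∪ … ∪ I_m is the decomposition of I into maximal intervals, then I = min{J_1, J_2} where J_1 := {min I_2 − #I_1, …, min I_2 − 1} ∪ I_2 ∪ … ∪ I_m and J_2 := I_1 ∪ {n−1−k+#I_1, …, n−1}, with J_2 = I_i^l for l = #I_1 and i = l + min I_1. -/

import Mathlib

/-- The sorted list of elements of a finset of naturals, in increasing order. -/
def sortedList (I : Finset ℕ) : List ℕ := I.sort (· ≤ ·)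

/-- The componentwise minimum of two finsets of naturals. -/
def fmin (I J : Finset ℕ) : Finset ℕ :=
  (List.zipWith min (sortedList I) (sortedList J)).toFinset

/-- The special `k`-subsets `I_i^l` of `{0, …, n-1}`. -/
def Iil (n k i l : ℕ) : Finset ℕ :=
  if i + k < n + l then Finset.Ico (i - l) i ∪ Finset.Ico (n - k + l) n
  else Finset.Ico (n - k) n

/-! Sorted, `I` is the run `a0, …, a0 + c - 1` followed by the sorted list of `I₂ = I \ I₁`;
`J₁` is the shifted run `b - c, …, b - 1` followed by the same list, and `J₂` is the run
followed by `n - (k - c), …, n - 1`. Since `a0 + c ≤ b`, the componentwise minimum takes the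
run from `J₂`; it takes the rest from `J₁`, because the `j`-th smallest element of a
`(k - c)`-subset of `[0, n)` is at most `n - (k - c) + j`. -/

namespace List

variable {α : Type*} [LinearOrder α] {l₁ l₂ : List α}

theorem zipWith_min_eq_left_of_forall₂ (h : Forall₂ (· ≤ ·) l₁ l₂) :
    zipWith min l₁ l₂ = l₁ := by
  induction h with
  | nil => rfl
  | cons hab _ ih => rw [zipWith_cons_cons, min_eq_left hab, ih]

theorem zipWith_min_eq_right_of_forall₂ (h : Forall₂ (· ≤ ·) l₁ l₂) :
    zipWith min l₂ l₁ = l₁ := by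
  rw [zipWith_comm_of_comm min_comm, zipWith_min_eq_left_of_forall₂ h]

theorem forall₂_le_range'_of_le {a d : ℕ} (h : a ≤ d) (c : ℕ) :
    Forall₂ (· ≤ ·) (range' a c) (range' d c) := by
  induction c generalizing a d with
  | zero => exact .nil
  | succ c ih => exact .cons h (ih (by omega))

theorem length_le_of_nodup_of_forall_mem_Ico {l : List ℕ} (hl : l.Nodup) {a b : ℕ}
    (h : ∀ x ∈ l, x ∈ Finset.Ico a b) : l.length ≤ b - a := by
  rw [← toFinset_card_of_nodup hl, ← Nat.card_Ico]
  exact Finset.card_le_card fun x hx => h x (mem_toFinset.1 hx)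

theorem forall₂_le_range'_of_pairwise_lt {l : List ℕ} (hl : l.Pairwise (· < ·)) {m : ℕ}
    (h : ∀ x ∈ l, x < m + l.length) : Forall₂ (· ≤ ·) l (range' m l.length) := by
  induction l generalizing m with
  | nil => exact .nil
  | cons x t ih =>
    obtain ⟨hx, ht⟩ := pairwise_cons.1 hl
    have hmem : ∀ y ∈ x :: t, y ∈ Finset.Ico x (m + (x :: t).length) := by
      simp only [mem_cons, forall_eq_or_imp, Finset.mem_Ico]
      exact ⟨⟨le_rfl, h x mem_cons_self⟩, fun y hy => ⟨(hx y hy).le, h y (mem_cons_of_mem _ hy)⟩⟩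
    have hxm : x ≤ m := by
      have := length_le_of_nodup_of_forall_mem_Ico hl.nodup hmem
      rw [length_cons] at this
      omega
    refine .cons hxm (ih ht fun y hy => ?_)
    have := h y (mem_cons_of_mem _ hy)
    rw [length_cons] at this
    omega

end List

theorem sortedList_toFinset {l : List ℕ} (hl : l.Pairwise (· < ·)) :
    sortedList l.toFinset = l :=
  (List.toFinset_sort _ hl.nodup).2 (hl.imp le_of_lt)

theorem sortedList_Ico (a b : ℕ) : sortedList (Finset.Ico a b) = List.range' a (b - a) := by
  have : Finset.Ico a b = (List.range' a (b - a)).toFinset := by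
    ext x
    simp only [Finset.mem_Ico, List.mem_toFinset, List.mem_range'_1]
    omega
  rw [this, sortedList_toFinset List.pairwise_lt_range']

theorem sortedList_union {A B : Finset ℕ} (h : ∀ a ∈ A, ∀ b ∈ B, a < b) :
    sortedList (A ∪ B) = sortedList A ++ sortedList B := by
  have hAB : A ∪ B = (sortedList A ++ sortedList B).toFinset := by
    ext x
    simp [sortedList]
  rw [hAB, sortedList_toFinset]
  exact List.pairwise_append.2 ⟨(Finset.sortedLT_sort A).pairwise,
    (Finset.sortedLT_sort B).pairwise, by simpa [sortedList] using h⟩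

theorem fmin_Ico_union_Ico_union_Ico {S : Finset ℕ} {a c d n : ℕ} (hSn : S ⊆ Finset.range n)
    (hdS : ∀ x ∈ S, d ≤ x) (had : a + c ≤ d) :
    fmin (Finset.Ico (d - c) d ∪ S) (Finset.Ico a (a + c) ∪ Finset.Ico (n - S.card) n) =
      Finset.Ico a (a + c) ∪ S := by
  have hS : S ⊆ Finset.Ico d n := fun x hx =>
    Finset.mem_Ico.2 ⟨hdS x hx, Finset.mem_range.1 (hSn hx)⟩
  have hcard : S.card ≤ n - d := (Finset.card_le_card hS).trans (Nat.card_Ico d n).le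
  have hsorted : (sortedList S).Pairwise (· < ·) := (Finset.sortedLT_sort S).pairwise
  have hlen : (sortedList S).length = S.card := Finset.length_sort _
  have hJ₁ : sortedList (Finset.Ico (d - c) d ∪ S) = List.range' (d - c) c ++ sortedList S := by
    rw [sortedList_union fun x hx y hy => (Finset.mem_Ico.1 hx).2.trans_le (hdS y hy),
      sortedList_Ico, Nat.sub_sub_self (by omega)]
  have hJ₂ : sortedList (Finset.Ico a (a + c) ∪ Finset.Ico (n - S.card) n) =
      List.range' a c ++ List.range' (n - S.card) (sortedList S).length := by
    rw [sortedList_union fun x hx y hy => by simp only [Finset.mem_Ico] at hx hy; omega,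
      sortedList_Ico, sortedList_Ico, Nat.add_sub_cancel_left, Nat.sub_sub_self (by omega), hlen]
  have hS_top : ∀ x ∈ sortedList S, x < n - S.card + (sortedList S).length := fun x hx => by
    rw [hlen, Nat.sub_add_cancel (by omega)]
    exact Finset.mem_range.1 (hSn ((Finset.mem_sort _).1 hx))
  rw [fmin, hJ₁, hJ₂, List.zipWith_append (by simp),
    List.zipWith_min_eq_right_of_forall₂ (List.forall₂_le_range'_of_le (by omega) c),
    List.zipWith_min_eq_left_of_forall₂ (List.forall₂_le_range'_of_pairwise_lt hsorted hS_top),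
    List.toFinset_append, List.toFinset_range'_1, sortedList, Finset.sort_toFinset]

theorem stmt3_general (n k : ℕ)
    (I : Finset ℕ) (hIsub : I ⊆ Finset.range n) (hIcard : I.card = k)
    (a0 c : ℕ)
    (hI1 : Finset.Ico a0 (a0 + c) ⊆ I)
    (hmin : ∀ x ∈ I, a0 ≤ x)
    (hmax : a0 + c ∉ I)
    (hne : (I \ Finset.Ico a0 (a0 + c)).Nonempty)
    (b : ℕ) (hb : b = (I \ Finset.Ico a0 (a0 + c)).min' hne) :
    fmin (Finset.Ico (b - c) b ∪ (I \ Finset.Ico a0 (a0 + c)))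
        (Finset.Ico a0 (a0 + c) ∪ Finset.Ico (n - k + c) n) = I
    ∧ Finset.Ico a0 (a0 + c) ∪ Finset.Ico (n - k + c) n = Iil n k (c + a0) c := by
  set I₂ := I \ Finset.Ico a0 (a0 + c)
  have hbI₂ : b ∈ I₂ := hb ▸ Finset.min'_mem I₂ hne
  have hb_le : ∀ x ∈ I₂, b ≤ x := fun x hx => hb ▸ Finset.min'_le I₂ x hx
  obtain ⟨hbI, hb_notin⟩ := Finset.mem_sdiff.1 hbI₂
  have hab : a0 + c ≤ b := by
    have := hmin b hbI
    rw [Finset.mem_Ico] at hb_notin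
    omega
  have hbn : b < n := Finset.mem_range.1 (hIsub hbI)
  have hck : c ≤ k := by simpa [hIcard] using Finset.card_le_card hI1
  have hcard : I₂.card = k - c := by
    rw [Finset.card_sdiff_of_subset hI1, hIcard, Nat.card_Ico, Nat.add_sub_cancel_left]
  have hak : a0 + k < n := by
    have hI : I ⊂ Finset.Ico a0 n := (Finset.ssubset_iff_of_subset fun x hx =>
      Finset.mem_Ico.2 ⟨hmin x hx, Finset.mem_range.1 (hIsub hx)⟩).2
        ⟨a0 + c, Finset.mem_Ico.2 ⟨by omega, by omega⟩, hmax⟩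
    have := Finset.card_lt_card hI
    rw [hIcard, Nat.card_Ico] at this
    omega
  refine ⟨?_, ?_⟩
  · rw [show n - k + c = n - I₂.card by omega,
      fmin_Ico_union_Ico_union_Ico (Finset.sdiff_subset.trans hIsub) hb_le hab,
      Finset.union_sdiff_of_subset hI1]
  · rw [Iil, if_pos (by omega), add_comm c a0, Nat.add_sub_cancel]

/-- Every `k`-subset `I` of `{0,…,n-1}` is a componentwise minimum of special subsets
`I_i^l` above it.  Precisely: let `I₁ = {a₀, …, a₀ + c - 1}` (with `c = #I₁ > 0`) be the
first maximal interval of `I` (so `a₀ = min I`, `I₁ ⊆ I`, `a₀ + c ∉ I`), suppose `I ≠ I₁`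
(there are at least two maximal intervals) and let `b = min I₂` be the least element of
`I \ I₁`.  Put `J₁ := {b - c, …, b - 1} ∪ (I \ I₁)` and `J₂ := I₁ ∪ {n - k + c, …, n-1}`.
Then `I = min{J₁, J₂}`, and `J₂ = I_i^l` for `l = c = #I₁` and `i = l + min I₁`. -/
theorem stmt3 (n k : ℕ) (hk : 0 < k) (hkn : k ≤ n)
    (I : Finset ℕ) (hIsub : I ⊆ Finset.range n) (hIcard : I.card = k)
    (a0 c : ℕ) (hc : 0 < c)
    (hI1 : Finset.Ico a0 (a0 + c) ⊆ I)
    (hmin : ∀ x ∈ I, a0 ≤ x)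
    (hmax : a0 + c ∉ I)
    (hne : (I \ Finset.Ico a0 (a0 + c)).Nonempty)
    (b : ℕ) (hb : b = (I \ Finset.Ico a0 (a0 + c)).min' hne) :
    fmin (Finset.Ico (b - c) b ∪ (I \ Finset.Ico a0 (a0 + c)))
        (Finset.Ico a0 (a0 + c) ∪ Finset.Ico (n - k + c) n) = I
    ∧ Finset.Ico a0 (a0 + c) ∪ Finset.Ico (n - k + c) n = Iil n k (c + a0) c :=
  stmt3_general n k I hIsub hIcard a0 c hI1 hmin hmax hne b hb
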